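/- arXiv:1103.1799 — 2 statements merged into one kernel-verified Lean document; each statement's English description precedes it below -/
import Mathlib

section
/- With v = (g'/f')^α and u = f·v as above, the identity u''v − v''u = (1−2α)·f''·(g'/f')^{2α} + 2α·g''·(g'/f')^{2α−1} holds. -/
/-!
Since `u = f v`, the Leibniz rule gives `u'' v - v'' u = f'' v² + 2 f' v' v`: the terms in `v''`
cancel. Now `v' = α L' v`, and differentiating `e^L = g'/f'` gives `f' L' = g'' e^{-L} - f''`, so
the right-hand side equals `(1 - 2α) f'' v² + 2α g'' v² e^{-L}`, where `v² = e^{2αL}`.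
-/

open Filter Topology

theorem deriv_deriv_mul {𝕜 : Type*} [NontriviallyNormedField 𝕜] [CompleteSpace 𝕜] {f g : 𝕜 → 𝕜}
    {z : 𝕜} (hf : AnalyticAt 𝕜 f z) (hg : AnalyticAt 𝕜 g z) :
    deriv (deriv (f * g)) z
      = deriv (deriv f) z * g z + 2 * deriv f z * deriv g z + f z * deriv (deriv g) z := by
  have leibniz := iteratedDeriv_mul (n := 2) hf.contDiffAt hg.contDiffAt
  simp only [Finset.sum_range_succ, Finset.sum_range_zero, iteratedDeriv_succ, iteratedDeriv_zero,
    Nat.choose_zero_right, Nat.choose_one_right, Nat.choose_self, Nat.sub_self] at leibniz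
  rw [leibniz]
  push_cast
  ring

theorem deriv_mul_cexp_mul_sq_of_cexp_eventuallyEq_div {𝕜 : Type*} [NontriviallyNormedField 𝕜]
    [NormedAlgebra 𝕜 ℂ] {L p q : 𝕜 → ℂ} {z : 𝕜} (hL : DifferentiableAt 𝕜 L z)
    (hp : DifferentiableAt 𝕜 p z) (hq : DifferentiableAt 𝕜 q z) (hq0 : q z ≠ 0)
    (hexp : (fun x => Complex.exp (L x)) =ᶠ[𝓝 z] fun x => p x / q x) :
    deriv L z * Complex.exp (L z) * q z ^ 2 = deriv p z * q z - p z * deriv q z := by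
  rw [mul_comm (deriv L z), ← deriv_cexp hL, hexp.deriv_eq, deriv_fun_div hp hq hq0,
    div_mul_cancel₀ _ (pow_ne_zero 2 hq0)]

theorem wronskian_second_identity_general
    (Ω : Set ℂ) (hΩ : IsOpen Ω)
    (f g L : ℂ → ℂ)
    (hf : DifferentiableOn ℂ f Ω) (hg : DifferentiableOn ℂ g Ω)
    (hfne : ∀ z ∈ Ω, deriv f z ≠ 0)
    (hL : DifferentiableOn ℂ L Ω)
    (hLlog : ∀ z ∈ Ω, Complex.exp (L z) = deriv g z / deriv f z)
    (α : ℂ)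
    (v u : ℂ → ℂ)
    (hv : ∀ z ∈ Ω, v z = Complex.exp (α * L z))
    (hu : ∀ z ∈ Ω, u z = f z * v z) :
    ∀ z ∈ Ω, deriv (deriv u) z * v z - deriv (deriv v) z * u z
      = (1 - 2 * α) * deriv (deriv f) z * Complex.exp ((2 * α) * L z)
        + 2 * α * deriv (deriv g) z * Complex.exp ((2 * α - 1) * L z) := by
  intro z hz
  have hΩz : Ω ∈ 𝓝 z := hΩ.mem_nhds hz
  have hf0 : deriv f z ≠ 0 := hfne z hz
  set V : ℂ → ℂ := fun x => Complex.exp (α * L x)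
  have hLa : AnalyticAt ℂ L z := hL.analyticAt hΩz
  have hVa : AnalyticAt ℂ V z := (analyticAt_const.mul hLa).cexp
  have hvV : v =ᶠ[𝓝 z] V := eventuallyEq_of_mem hΩz hv
  have huV : u =ᶠ[𝓝 z] f * V := eventuallyEq_of_mem hΩz fun x hx => by simp [hu x hx, hv x hx, V]
  have hV' : deriv V z = α * deriv L z * V z := by
    rw [deriv_cexp (hLa.differentiableAt.const_mul α), deriv_const_mul _ hLa.differentiableAt]
    ring
  have hL' : deriv L z * Complex.exp (L z) * deriv f z ^ 2
      = deriv (deriv g) z * deriv f z - deriv g z * deriv (deriv f) z :=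
    deriv_mul_cexp_mul_sq_of_cexp_eventuallyEq_div hLa.differentiableAt
      (hg.analyticAt hΩz).deriv.differentiableAt (hf.analyticAt hΩz).deriv.differentiableAt hf0
      (eventuallyEq_of_mem hΩz hLlog)
  have hEf : Complex.exp (L z) * deriv f z = deriv g z := by
    rw [hLlog z hz, div_mul_cancel₀ _ hf0]
  have hexp2 : Complex.exp ((2 * α) * L z) = V z ^ 2 := by
    rw [← Complex.exp_nat_mul]; ring_nf
  have hexp21 : Complex.exp ((2 * α - 1) * L z) * Complex.exp (L z) = V z ^ 2 := by
    rw [← Complex.exp_add, ← Complex.exp_nat_mul]; ring_nf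
  rw [huV.deriv.deriv_eq, hvV.deriv.deriv_eq, hvV.eq_of_nhds, huV.eq_of_nhds,
    deriv_deriv_mul (hf.analyticAt hΩz) hVa, Pi.mul_apply, hV', hexp2]
  apply mul_left_cancel₀ (mul_ne_zero (Complex.exp_ne_zero (L z)) hf0)
  linear_combination 2 * α * V z ^ 2 * (deriv (deriv f) z * hEf + hL')
    - 2 * α * deriv f z * deriv (deriv g) z * hexp21

/-- With `v = (g'/f')^α = exp (α • L)` (a fixed holomorphic branch) and `u = f·v`,
we have `u''v − v''u = (1−2α)·f''·(g'/f')^{2α} + 2α·g''·(g'/f')^{2α−1}`. -/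
theorem wronskian_second_identity
    (Ω : Set ℂ) (hΩ : IsOpen Ω) (hconn : IsPreconnected Ω)
    (f g L : ℂ → ℂ)
    (hf : DifferentiableOn ℂ f Ω) (hg : DifferentiableOn ℂ g Ω)
    (hf' : DifferentiableOn ℂ (deriv f) Ω) (hg' : DifferentiableOn ℂ (deriv g) Ω)
    (hf'' : DifferentiableOn ℂ (deriv (deriv f)) Ω)
    (hg'' : DifferentiableOn ℂ (deriv (deriv g)) Ω)
    (hfne : ∀ z ∈ Ω, deriv f z ≠ 0) (hgne : ∀ z ∈ Ω, deriv g z ≠ 0)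
    (hL : DifferentiableOn ℂ L Ω)
    (hLlog : ∀ z ∈ Ω, Complex.exp (L z) = deriv g z / deriv f z)
    (α : ℂ)
    (v u : ℂ → ℂ)
    (hv : ∀ z ∈ Ω, v z = Complex.exp (α * L z))
    (hu : ∀ z ∈ Ω, u z = f z * v z) :
    ∀ z ∈ Ω, deriv (deriv u) z * v z - deriv (deriv v) z * u z
      = (1 - 2 * α) * deriv (deriv f) z * Complex.exp ((2 * α) * L z)
        + 2 * α * deriv (deriv g) z * Complex.exp ((2 * α - 1) * L z) :=
  wronskian_second_identity_general Ω hΩ f g L hf hg hfne hL hLlog α v u hv hu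
end

section
/- With v = (g'/f')^α and u = f·v as above, the Wronskian-type identity u''v' − v''u' = α·f'·(g'/f')^{2α}·[ (S_f − S_g) + (α − 1/2)·(f''/f' − g''/g')^2 ] holds, where S_f = (f''/f')' − (1/2)(f''/f')^2 is the Schwarzian derivative. -/
/-!
For `u = f v` the terms with `f` undifferentiated cancel, so
`u''v' − v''u' = f''vv' + 2f'v'² − f'vv''`. Differentiating `exp L = g'/f'` logarithmically gives
`L' = M := Q − P` with `P = f''/f'`, `Q = g''/g'`, hence `v' = αMv` and `v'' = (αM' + α²M²)v`.
Substituting, the Wronskian is `αf'v²(PM + αM² − M')`, and this is the right-hand side because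
`M' = Q' − P'` and `PM = (Q² − P² − M²)/2`.
-/

open Filter Topology

section

variable {𝕜 : Type*} [NontriviallyNormedField 𝕜] {f v u m : 𝕜 → 𝕜} {m' z : 𝕜}

theorem wronskian_deriv_eq_of_eventuallyEq_mul (hu : u =ᶠ[𝓝 z] f * v)
    (hf : ∀ᶠ w in 𝓝 z, DifferentiableAt 𝕜 f w) (hv : ∀ᶠ w in 𝓝 z, DifferentiableAt 𝕜 v w)
    (hf' : DifferentiableAt 𝕜 (deriv f) z) (hv' : DifferentiableAt 𝕜 (deriv v) z) :
    deriv (deriv u) z * deriv v z - deriv (deriv v) z * deriv u z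
      = (deriv (deriv f) z * v z + 2 * deriv f z * deriv v z) * deriv v z
        - deriv f z * v z * deriv (deriv v) z := by
  have hu' : deriv u =ᶠ[𝓝 z] fun w => deriv f w * v w + f w * deriv v w := by
    filter_upwards [hu.deriv, hf, hv] with w hw hfw hvw
    exact hw.trans (deriv_mul hfw hvw)
  have hu'' : HasDerivAt (fun w => deriv f w * v w + f w * deriv v w)
      (deriv (deriv f) z * v z + deriv f z * deriv v z
        + (deriv f z * deriv v z + f z * deriv (deriv v) z)) z :=
    (hf'.hasDerivAt.mul hv.self_of_nhds.hasDerivAt).add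
      (hf.self_of_nhds.hasDerivAt.mul hv'.hasDerivAt)
  rw [hu'.deriv_eq, hu''.deriv, hu'.eq_of_nhds]
  ring

theorem deriv_deriv_eq_of_deriv_eventuallyEq_mul (hv : DifferentiableAt 𝕜 v z)
    (hm : HasDerivAt m m' z) (hvm : deriv v =ᶠ[𝓝 z] m * v) :
    deriv (deriv v) z = (m' + m z ^ 2) * v z := by
  rw [hvm.deriv_eq, (hm.mul hv.hasDerivAt).deriv, hvm.eq_of_nhds, Pi.mul_apply]
  ring

end

theorem deriv_eq_logDeriv_of_cexp_eventuallyEq {L h : ℂ → ℂ} {z : ℂ}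
    (hL : DifferentiableAt ℂ L z) (hLh : (fun w => Complex.exp (L w)) =ᶠ[𝓝 z] h) :
    deriv L z = logDeriv h z := by
  rw [← (logDeriv_congr_nhds hLh).eq_of_nhds, ← Function.comp_def,
    logDeriv_comp Complex.differentiableAt_exp hL, Complex.logDeriv_exp, Pi.one_apply, one_mul]

theorem deriv_eventuallyEq_of_eventuallyEq_cexp {L M v : ℂ → ℂ} {z α : ℂ}
    (hL : ∀ᶠ w in 𝓝 z, DifferentiableAt ℂ L w) (hLM : deriv L =ᶠ[𝓝 z] M)
    (hv : v =ᶠ[𝓝 z] fun w => Complex.exp (α * L w)) :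
    deriv v =ᶠ[𝓝 z] (fun w => α * M w) * v := by
  filter_upwards [hv.eventuallyEq_nhds, hL, hLM] with w hvw hLw hLMw
  rw [Pi.mul_apply, hvw.deriv_eq, ((hLw.hasDerivAt.const_mul α).cexp).deriv, hvw.eq_of_nhds,
    ← hLMw]
  ring

theorem wronskian_third_identity_general
    (Ω : Set ℂ) (hΩ : IsOpen Ω)
    (f g L : ℂ → ℂ)
    (hf : DifferentiableOn ℂ f Ω)
    (hf' : DifferentiableOn ℂ (deriv f) Ω) (hg' : DifferentiableOn ℂ (deriv g) Ω)
    (hf'' : DifferentiableOn ℂ (deriv (deriv f)) Ω)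
    (hg'' : DifferentiableOn ℂ (deriv (deriv g)) Ω)
    (hfne : ∀ z ∈ Ω, deriv f z ≠ 0) (hgne : ∀ z ∈ Ω, deriv g z ≠ 0)
    (hL : DifferentiableOn ℂ L Ω)
    (hLlog : ∀ z ∈ Ω, Complex.exp (L z) = deriv g z / deriv f z)
    (α : ℂ)
    (v u Sf Sg : ℂ → ℂ)
    (hv : ∀ z ∈ Ω, v z = Complex.exp (α * L z))
    (hu : ∀ z ∈ Ω, u z = f z * v z)
    (hSf : ∀ z ∈ Ω, Sf z = deriv (fun w => deriv (deriv f) w / deriv f w) z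
        - (1 / 2) * (deriv (deriv f) z / deriv f z) ^ 2)
    (hSg : ∀ z ∈ Ω, Sg z = deriv (fun w => deriv (deriv g) w / deriv g w) z
        - (1 / 2) * (deriv (deriv g) z / deriv g z) ^ 2) :
    ∀ z ∈ Ω, deriv (deriv u) z * deriv v z - deriv (deriv v) z * deriv u z
      = α * deriv f z * Complex.exp ((2 * α) * L z)
        * ((Sf z - Sg z)
          + (α - 1 / 2) * (deriv (deriv f) z / deriv f z
              - deriv (deriv g) z / deriv g z) ^ 2) := by
  have hL' : ∀ w ∈ Ω, deriv L w = logDeriv (deriv g) w - logDeriv (deriv f) w := fun w hw => by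
    have hΩw := hΩ.mem_nhds hw
    rw [deriv_eq_logDeriv_of_cexp_eventuallyEq (hL.differentiableAt hΩw)
        (eventually_of_mem hΩw hLlog),
      logDeriv_div w (hgne w hw) (hfne w hw) (hg'.differentiableAt hΩw) (hf'.differentiableAt hΩw)]
  have hvd : DifferentiableOn ℂ v Ω := (hL.const_mul α).cexp.congr hv
  intro z hz
  have hΩz := hΩ.mem_nhds hz
  have hv' := deriv_eventuallyEq_of_eventuallyEq_cexp (hL.eventually_differentiableAt hΩz)
    (eventually_of_mem hΩz hL') (eventually_of_mem hΩz hv)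
  have hM : HasDerivAt (fun w => α * (logDeriv (deriv g) w - logDeriv (deriv f) w))
      (α * (deriv (logDeriv (deriv g)) z - deriv (logDeriv (deriv f)) z)) z :=
    ((((hg''.differentiableAt hΩz).div (hg'.differentiableAt hΩz) (hgne z hz)).hasDerivAt).sub
      ((hf''.differentiableAt hΩz).div (hf'.differentiableAt hΩz) (hfne z hz)).hasDerivAt).const_mul
        α
  have hexp : Complex.exp ((2 * α) * L z) = v z ^ 2 := by
    rw [hv z hz, ← Complex.exp_nat_mul]; ring_nf
  have hf''z : deriv (deriv f) z = logDeriv (deriv f) z * deriv f z :=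
    (div_mul_cancel₀ _ (hfne z hz)).symm
  rw [wronskian_deriv_eq_of_eventuallyEq_mul (eventually_of_mem hΩz hu)
      (hf.eventually_differentiableAt hΩz) (hvd.eventually_differentiableAt hΩz)
      (hf'.differentiableAt hΩz)
      ((hM.differentiableAt.mul (hvd.differentiableAt hΩz)).congr_of_eventuallyEq hv'),
    deriv_deriv_eq_of_deriv_eventuallyEq_mul (hvd.differentiableAt hΩz) hM hv', hv'.eq_of_nhds,
    hSf z hz, hSg z hz, hexp]
  simp only [← logDeriv_apply, Pi.mul_apply]
  rw [hf''z]
  ring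

/-- With `v = (g'/f')^α = exp (α • L)` and `u = f·v`, the Wronskian-type identity
`u''v' − v''u' = α·f'·(g'/f')^{2α}·[(S_f − S_g) + (α − 1/2)·(f''/f' − g''/g')²]` holds,
where `S_f = (f''/f')' − (1/2)(f''/f')²` is the Schwarzian derivative. -/
theorem wronskian_third_identity
    (Ω : Set ℂ) (hΩ : IsOpen Ω) (hconn : IsPreconnected Ω)
    (f g L : ℂ → ℂ)
    (hf : DifferentiableOn ℂ f Ω) (hg : DifferentiableOn ℂ g Ω)
    (hf' : DifferentiableOn ℂ (deriv f) Ω) (hg' : DifferentiableOn ℂ (deriv g) Ω)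
    (hf'' : DifferentiableOn ℂ (deriv (deriv f)) Ω)
    (hg'' : DifferentiableOn ℂ (deriv (deriv g)) Ω)
    (hfne : ∀ z ∈ Ω, deriv f z ≠ 0) (hgne : ∀ z ∈ Ω, deriv g z ≠ 0)
    (hL : DifferentiableOn ℂ L Ω)
    (hLlog : ∀ z ∈ Ω, Complex.exp (L z) = deriv g z / deriv f z)
    (α : ℂ)
    (v u Sf Sg : ℂ → ℂ)
    (hv : ∀ z ∈ Ω, v z = Complex.exp (α * L z))
    (hu : ∀ z ∈ Ω, u z = f z * v z)
    (hSf : ∀ z ∈ Ω, Sf z = deriv (fun w => deriv (deriv f) w / deriv f w) z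
        - (1 / 2) * (deriv (deriv f) z / deriv f z) ^ 2)
    (hSg : ∀ z ∈ Ω, Sg z = deriv (fun w => deriv (deriv g) w / deriv g w) z
        - (1 / 2) * (deriv (deriv g) z / deriv g z) ^ 2) :
    ∀ z ∈ Ω, deriv (deriv u) z * deriv v z - deriv (deriv v) z * deriv u z
      = α * deriv f z * Complex.exp ((2 * α) * L z)
        * ((Sf z - Sg z)
          + (α - 1 / 2) * (deriv (deriv f) z / deriv f z
              - deriv (deriv g) z / deriv g z) ^ 2) :=
  wronskian_third_identity_general Ω hΩ f g L hf hf' hg' hf'' hg'' hfne hgne hL hLlog α v u Sf Sg hv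
    hu hSf hSg
end
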